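/- For any disjunctive definite program P and interpretation M = ⟨I,T⟩: M is a model of P if and only if the set of true atoms of T3+_P(M) is a subset of (or equal to) the set T of true atoms of M, i.e., T⁺ ⊆ T where T3+_P(⟨I,T⟩) = ⟨I,T⁺⟩. -/
import Mathlib


open Classical

/-- The three truth values: true, false, inadmissible. -/
inductive TV : Type where
  | t : TV
  | f : TV
  | i : TV
deriving DecidableEq

/-- Kleene strong three-valued conjunction. -/
def TV.and : TV → TV → TV
  | .t, .t => .t
  | .f, _ => .f
  | _, .f => .f
  | _, _ => .i

/-- Kleene strong three-valued disjunction. -/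
def TV.or : TV → TV → TV
  | .f, .f => .f
  | .t, _ => .t
  | _, .t => .t
  | _, _ => .i

/-- Ground body formulas over a set `α` of ground atoms:
built from atoms using binary conjunction and disjunction. -/
inductive Body (α : Type*) : Type _ where
  | atom : α → Body α
  | conj : Body α → Body α → Body α
  | disj : Body α → Body α → Body α

variable {α : Type*}

/-- Value of an atom in the interpretation `⟨I,T⟩` (inadmissible atoms `I`,
true atoms `T`, all other atoms false). -/
noncomputable def atomVal (I T : Set α) (a : α) : TV :=
  if a ∈ T then TV.t else if a ∈ I then TV.i else TV.f

/-- Kleene strong three-valued evaluation of a body formula in `⟨I,T⟩`. -/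
noncomputable def beval (I T : Set α) : Body α → TV
  | .atom a => atomVal I T a
  | .conj b c => TV.and (beval I T b) (beval I T c)
  | .disj b c => TV.or (beval I T b) (beval I T c)

/-- A (ground) disjunctive definite program: a set of ground clause instances
`H ← B`, represented as pairs `(H, B)`. -/
abbrev Program (α : Type*) := Set (α × Body α)

/-- `⟨I,T⟩` is a model of `P`: no clause instance `H ← B` in `P` has `H`
evaluating to F while `B` evaluates to T or I (i.e. head F implies body F). -/
def IsModel (P : Program α) (I T : Set α) : Prop :=
  ∀ c ∈ P, atomVal I T c.1 = TV.f → beval I T c.2 = TV.f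

/-- The operator `T3⁺_P` applied to `⟨I,T⟩`: the set of inadmissible atoms is
`I` again, and the set of true atoms consists of the atoms `A ∉ I` such that
some clause instance `A ← B` in `P` has `B` evaluating to T or I in `⟨I,T⟩`
(all other atoms are false). This returns the pair `⟨I, T⁺⟩`. -/
def T3plus {α : Type*} (P : Program α) (I T : Set α) : Set α × Set α :=
  (I, {a | a ∉ I ∧ ∃ c ∈ P, c.1 = a ∧ beval I T c.2 ≠ TV.f})

/-- `⟨I,T⟩` is a model of `P` iff the set of true atoms of
`T3⁺_P(⟨I,T⟩)` is a subset of `T`, i.e. `T⁺ ⊆ T`. -/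
theorem model_iff_T3plus_true_subset {α : Type*} (P : Program α) (I T : Set α)
    (hdisj : Disjoint I T) :
    IsModel P I T ↔ (T3plus P I T).2 ⊆ T := by
  constructor
  · intro hm a ha
    obtain ⟨haI, c, hcP, hc1, hbev⟩ := ha
    by_contra haT
    apply hbev
    apply hm c hcP
    simp [atomVal, hc1, haT, haI]
  · intro hsub c hcP hhead
    by_contra hbev
    have h1 : c.1 ∈ (T3plus P I T).2 := by
      refine ⟨?_, c, hcP, rfl, hbev⟩
      intro hI
      simp [atomVal, hI] at hhead
      split at hhead <;> simp_all
    have := hsub h1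
    simp [atomVal, this] at hhead
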